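/- arXiv:2404.03975 — 3 statements merged into one kernel-verified Lean document; each statement's English description precedes it below -/
import Mathlib

section
/- Let N ≥ 2 with smallest prime factor p. Let C be a submodule of (ZMod N)^(d+1) such that gcd of all entries of all words of C together with N equals 1, and suppose every word of C has at least one zero coordinate (C is thin) and C is nondegenerate (no coordinate is identically zero on C). Then d ≥ p. -/
/-- Let `N ≥ 2` with smallest prime factor `p = N.minFac`. If `C ⊆ (ZMod N)^(d+1)` is a
linear code whose entries, together with `N`, have gcd `1`, which is thin (every word has
a zero coordinate) and nondegenerate (no coordinate vanishes identically on `C`),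
then `d ≥ p`. -/
theorem thin_code_dim_ge_minFac (N d : ℕ) (hN : 2 ≤ N)
    (C : Submodule (ZMod N) (Fin (d + 1) → ZMod N))
    (hgcd : ∀ k : ℕ, k ∣ N → (∀ c ∈ C, ∀ i, k ∣ (c i).val) → k = 1)
    (hthin : ∀ c ∈ C, ∃ i, c i = 0)
    (hnondeg : ∀ i, ∃ c ∈ C, c i ≠ 0) :
    N.minFac ≤ d := by
  classical
  by_contra hlt
  push_neg at hlt
  set p := N.minFac with hp
  have hp2 : 2 ≤ p := (Nat.minFac_prime (by omega)).two_le
  haveI : NeZero N := ⟨by omega⟩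
  let Cs : Finset (Fin (d+1) → ZMod N) := Set.toFinset (C : Set _)
  have hmemCs : ∀ c, c ∈ Cs ↔ c ∈ C := by intro c; simp [Cs]
  let K : Fin (d+1) → Finset (Fin (d+1) → ZMod N) :=
    fun i => Cs.filter (fun c => c i = 0)
  have h0C : (0 : Fin (d+1) → ZMod N) ∈ Cs := (hmemCs 0).mpr C.zero_mem
  have h0K : ∀ i, (0 : Fin (d+1) → ZMod N) ∈ K i := by
    intro i; exact Finset.mem_filter.mpr ⟨h0C, rfl⟩
  -- key cardinality bound
  have key : ∀ i, p * (K i).card ≤ Cs.card := by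
    intro i
    obtain ⟨c0, hc0C, hc0i⟩ := hnondeg i
    have hord : p ≤ addOrderOf (c0 i) := by
      have h1 : addOrderOf (c0 i) ≠ 1 := by
        simpa [AddMonoid.addOrderOf_eq_one_iff] using hc0i
      have h0 : 0 < addOrderOf (c0 i) := addOrderOf_pos _
      have hdvd : addOrderOf (c0 i) ∣ N := by
        have := addOrderOf_dvd_card (x := c0 i)
        simpa [Nat.card_zmod] using this
      exact Nat.minFac_le_of_dvd (by omega) hdvd
    have hinj : Set.InjOn (fun jc : ℕ × (Fin (d+1) → ZMod N) => jc.2 + jc.1 • c0)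
        ((Finset.range p ×ˢ K i) : Finset (ℕ × (Fin (d+1) → ZMod N))) := by
      rintro ⟨j, c⟩ hjc ⟨j', c'⟩ hjc' heq
      simp only [Finset.mem_coe, Finset.mem_product, Finset.mem_range] at hjc hjc'
      have hj : j < p := hjc.1
      have hj' : j' < p := hjc'.1
      obtain ⟨hcC, hci⟩ := Finset.mem_filter.mp hjc.2
      obtain ⟨hc'C, hc'i⟩ := Finset.mem_filter.mp hjc'.2
      simp only at heq
      have hI : j • c0 i = j' • c0 i := by
        have := congrFun heq i
        simpa [hci, hc'i] using this
      have haux : ∀ a b : ℕ, a < b → b < p → a • c0 i = b • c0 i → False := by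
        intro a b hab hbp he
        have h0 : (b - a) • c0 i = 0 := by
          have : a • c0 i + (b - a) • c0 i = a • c0 i + 0 := by
            rw [← add_nsmul, add_zero, Nat.add_sub_cancel' hab.le]
            exact he.symm
          exact add_left_cancel this
        have := addOrderOf_le_of_nsmul_eq_zero (by omega : 0 < b - a) h0
        omega
      have hjj : j = j' := by
        rcases lt_trichotomy j j' with h | h | h
        · exact (haux j j' h hj' hI).elim
        · exact h
        · exact (haux j' j h hj hI.symm).elim
      subst hjj
      have : c = c' := by
        have := add_right_cancel heq
        exact this
      simp [this]
    have hmaps : ∀ jc ∈ (Finset.range p ×ˢ K i),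
        (fun jc : ℕ × (Fin (d+1) → ZMod N) => jc.2 + jc.1 • c0) jc ∈ Cs := by
      rintro ⟨j, c⟩ hjc
      simp only [Finset.mem_product, Finset.mem_range] at hjc
      obtain ⟨hcC, -⟩ := Finset.mem_filter.mp hjc.2
      refine (hmemCs _).mpr (C.add_mem ((hmemCs _).mp hcC) ?_)
      exact C.toAddSubmonoid.nsmul_mem hc0C j
    calc p * (K i).card = ((Finset.range p ×ˢ K i)).card := by
          rw [Finset.card_product, Finset.card_range]
      _ ≤ Cs.card := Finset.card_le_card_of_injOn _ hmaps hinj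
  -- covering bound
  have cover : Cs.erase 0 ⊆ Finset.univ.biUnion (fun i => (K i).erase 0) := by
    intro c hc
    obtain ⟨hc0, hcC⟩ := Finset.mem_erase.mp hc
    obtain ⟨i, hi⟩ := hthin c ((hmemCs c).mp hcC)
    exact Finset.mem_biUnion.mpr ⟨i, Finset.mem_univ i,
      Finset.mem_erase.mpr ⟨hc0, Finset.mem_filter.mpr ⟨hcC, hi⟩⟩⟩
  have hcard1 : Cs.card - 1 ≤ ∑ i : Fin (d+1), ((K i).card - 1) := by
    calc Cs.card - 1 = (Cs.erase 0).card := (Finset.card_erase_of_mem h0C).symm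
      _ ≤ (Finset.univ.biUnion (fun i => (K i).erase 0)).card := Finset.card_le_card cover
      _ ≤ ∑ i : Fin (d+1), ((K i).erase 0).card := Finset.card_biUnion_le
      _ = ∑ i : Fin (d+1), ((K i).card - 1) := by
          refine Finset.sum_congr rfl fun i _ => ?_
          rw [Finset.card_erase_of_mem (h0K i)]
  set q := Cs.card / p with hq
  have hKq : ∀ i, (K i).card ≤ q := by
    intro i
    rw [hq, Nat.le_div_iff_mul_le (by omega : 0 < p)]
    rw [mul_comm]; exact key i
  have hq1 : 1 ≤ q := le_trans (Finset.card_pos.mpr ⟨0, h0K 0⟩) (hKq 0)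
  obtain ⟨s, hs⟩ : ∃ s, q = s + 1 := ⟨q - 1, by omega⟩
  have hsum : ∑ i : Fin (d+1), ((K i).card - 1) ≤ (d+1) * s := by
    calc ∑ i : Fin (d+1), ((K i).card - 1) ≤ ∑ _i : Fin (d+1), s :=
          Finset.sum_le_sum fun i _ => by have := hKq i; omega
      _ = (d+1) * s := by simp [Finset.sum_const, mul_comm]
  have h1 : (d+1) * s ≤ p * s := Nat.mul_le_mul_right _ (by omega)
  have hpq : p * q ≤ Cs.card := by
    rw [hq, mul_comm]; exact Nat.div_mul_le_self _ _
  have hps : p * s + p ≤ Cs.card := by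
    have : p * (s + 1) ≤ Cs.card := hs ▸ hpq
    simpa [Nat.mul_succ] using this
  have hfin : Cs.card - 1 ≤ p * s := le_trans hcard1 (le_trans hsum h1)
  omega
end

section
/- Let N ≥ 9 and consider a 2×5 matrix g over ZMod N whose two rows each contain a zero entry, of the form rows (a₁·M, b₁, 0, b₅, b₇) and (a₂·M, 0, b₄, b₆, b₈) with M = N/α for α ∈ {2,3,4}, where gcd(a₁,a₂,α) = 1 and all five columns other than the first have column-gcd (with N) strictly less than M. Then the four points (α,1), (1,α), (α,−1), (−1,α) ∈ (ZMod N)² cannot all lie in the union of the hyperplanes H₁ = {x : b₁x₁ = 0} and H₂ = {x : b₄x₂ = 0}; moreover no single hyperplane H = {x : ux₁ + vx₂ = 0} with gcd(u,v,N) < M can contain three of these four points. -/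
lemma hyper_contra (N α : ℕ) (hN : 9 ≤ N) (hα2 : 2 ≤ α) (u v c : ZMod N)
    (h2 : 2 * v = 0) (hc : u = c * v) :
    ¬ Nat.gcd u.val (Nat.gcd v.val N) < N / α := by
  haveI : NeZero N := ⟨by omega⟩
  have hN0 : 0 < N := by omega
  have hdvd : N ∣ 2 * v.val := by
    have : ((2 * v.val : ℕ) : ZMod N) = 0 := by
      push_cast [ZMod.natCast_val, ZMod.cast_id]
      simpa using h2
    exact (ZMod.natCast_eq_zero_iff _ _).mp this
  have hvlt : v.val < N := ZMod.val_lt v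
  have : 2 * v.val = 0 ∨ 2 * v.val = N := by
    rcases hdvd with ⟨k, hk⟩
    have hk2 : k < 2 := by nlinarith
    rcases (by omega : k = 0 ∨ k = 1) with rfl | rfl <;> omega
  rcases this with h0 | hNv
  · -- v = 0, so u = 0
    have hv0 : v = 0 := by
      have : v.val = 0 := by omega
      exact (ZMod.val_eq_zero v).mp this
    subst hv0
    simp only [mul_zero] at hc
    subst hc
    simp [ZMod.val_zero]
    have := Nat.div_le_self N α
    omega
  · -- v.val = N/2
    have hvpos : 0 < v.val := by omega
    -- u = 0 or u = v
    have hu : u = 0 ∨ u = v := by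
      have hcv : ((c.val : ℕ) : ZMod N) = c := ZMod.natCast_val c |>.trans (ZMod.cast_id _ _)
      rcases Nat.even_or_odd c.val with ⟨q, hq⟩ | ⟨q, hq⟩
      · left
        rw [hc, ← hcv, hq]
        push_cast
        ring_nf
        calc (q : ZMod N) * v * 2 = q * (2 * v) := by ring
        _ = 0 := by rw [h2]; ring
      · right
        rw [hc, ← hcv, hq]
        calc ((2*q + 1 : ℕ) : ZMod N) * v = q * (2 * v) + v := by push_cast; ring
        _ = v := by rw [h2]; ring
    have hdu : v.val ∣ u.val := by
      rcases hu with h | h <;> subst h <;> simp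
    have hgd : v.val ∣ Nat.gcd u.val (Nat.gcd v.val N) :=
      Nat.dvd_gcd hdu (Nat.dvd_gcd dvd_rfl ⟨2, by omega⟩)
    have h1 : v.val ≤ Nat.gcd u.val (Nat.gcd v.val N) :=
      Nat.le_of_dvd (Nat.gcd_pos_of_pos_right _ (Nat.gcd_pos_of_pos_right _ hN0)) hgd
    have h2' : N / α ≤ N / 2 := Nat.div_le_div_left hα2 (by norm_num)
    have : N / 2 = v.val := by omega
    omega

lemma triple_contra (N α : ℕ) (hN : 9 ≤ N) (hα2 : 2 ≤ α) (u v : ZMod N)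
    (huv : Nat.gcd u.val (Nat.gcd v.val N) < N / α)
    (h : (u * α + v = 0 ∧ u * α - v = 0 ∧ (u + v * α = 0 ∨ -u + v * α = 0)) ∨
         (u + v * α = 0 ∧ -u + v * α = 0 ∧ (u * α + v = 0 ∨ u * α - v = 0))) : False := by
  rcases h with ⟨h0, h2', h13⟩ | ⟨h1, h3, h02⟩
  · have hv2 : 2 * v = 0 := by linear_combination h0 - h2'
    rcases h13 with h1 | h3
    · exact hyper_contra N α hN hα2 u v (-(α : ZMod N)) hv2 (by linear_combination h1) huv
    · exact hyper_contra N α hN hα2 u v ((α : ZMod N)) hv2 (by linear_combination -h3) huv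
  · have hu2 : 2 * u = 0 := by linear_combination h1 - h3
    have hswap : Nat.gcd u.val (Nat.gcd v.val N) = Nat.gcd v.val (Nat.gcd u.val N) := by
      rw [← Nat.gcd_assoc, Nat.gcd_comm u.val v.val, Nat.gcd_assoc]
    rw [hswap] at huv
    rcases h02 with h0 | h2'
    · exact hyper_contra N α hN hα2 v u (-(α : ZMod N)) hu2 (by linear_combination h0) huv
    · exact hyper_contra N α hN hα2 v u ((α : ZMod N)) hu2 (by linear_combination -h2') huv


/-- Let `N ≥ 9`, `α ∈ {2,3,4}` with `α ∣ N`, `M = N/α`, and consider a 2×5 matrix over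
`ZMod N` with rows `(a₁M, b₁, 0, b₅, b₇)` and `(a₂M, 0, b₄, b₆, b₈)` where
`gcd(a₁, a₂, α) = 1` and all columns other than the first have column gcd (with `N`)
strictly less than `M`. Then the four points `(α,1), (1,α), (α,−1), (−1,α)` cannot all lie
in `H₁ ∪ H₂` where `H₁ = {x | b₁x₁ = 0}`, `H₂ = {x | b₄x₂ = 0}`; moreover no single
hyperplane `{x | ux₁ + vx₂ = 0}` with `gcd(u, v, N) < M` contains three of the four
points. -/
theorem four_points_not_covered (N α : ℕ) (hN : 9 ≤ N)
    (hα : α = 2 ∨ α = 3 ∨ α = 4) (hdvd : α ∣ N)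
    (a₁ a₂ : ℕ) (ha : Nat.gcd a₁ (Nat.gcd a₂ α) = 1)
    (b₁ b₄ b₅ b₆ b₇ b₈ : ZMod N)
    (hc1 : Nat.gcd b₁.val N < N / α)
    (hc2 : Nat.gcd b₄.val N < N / α)
    (hc3 : Nat.gcd b₅.val (Nat.gcd b₆.val N) < N / α)
    (hc4 : Nat.gcd b₇.val (Nat.gcd b₈.val N) < N / α) :
    (¬ ∀ i : Fin 4,
        b₁ * ((![((α : ZMod N), 1), (1, (α : ZMod N)), ((α : ZMod N), -1), (-1, (α : ZMod N))]) i).1 = 0 ∨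
        b₄ * ((![((α : ZMod N), 1), (1, (α : ZMod N)), ((α : ZMod N), -1), (-1, (α : ZMod N))]) i).2 = 0) ∧
    (∀ u v : ZMod N, Nat.gcd u.val (Nat.gcd v.val N) < N / α →
      ¬ ∃ i j k : Fin 4, i ≠ j ∧ i ≠ k ∧ j ≠ k ∧
        (u * ((![((α : ZMod N), 1), (1, (α : ZMod N)), ((α : ZMod N), -1), (-1, (α : ZMod N))]) i).1 +
          v * ((![((α : ZMod N), 1), (1, (α : ZMod N)), ((α : ZMod N), -1), (-1, (α : ZMod N))]) i).2 = 0) ∧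
        (u * ((![((α : ZMod N), 1), (1, (α : ZMod N)), ((α : ZMod N), -1), (-1, (α : ZMod N))]) j).1 +
          v * ((![((α : ZMod N), 1), (1, (α : ZMod N)), ((α : ZMod N), -1), (-1, (α : ZMod N))]) j).2 = 0) ∧
        (u * ((![((α : ZMod N), 1), (1, (α : ZMod N)), ((α : ZMod N), -1), (-1, (α : ZMod N))]) k).1 +
          v * ((![((α : ZMod N), 1), (1, (α : ZMod N)), ((α : ZMod N), -1), (-1, (α : ZMod N))]) k).2 = 0)) := by
  haveI : NeZero N := ⟨by omega⟩
  have hα2 : 2 ≤ α := by omega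
  have hN0 : 0 < N := by omega
  constructor
  · intro h
    rcases h 0 with h | h
    · simp only [Matrix.cons_val_zero] at h
      -- b₁ * α = 0
      have hdvd' : N ∣ b₁.val * α := by
        have : ((b₁.val * α : ℕ) : ZMod N) = 0 := by
          push_cast [ZMod.natCast_val, ZMod.cast_id]
          simpa using h
        exact (ZMod.natCast_eq_zero_iff _ _).mp this
      obtain ⟨M, hM⟩ := hdvd
      have hM' : M ∣ b₁.val := by
        rcases hdvd' with ⟨k, hk⟩
        refine ⟨k, Nat.eq_of_mul_eq_mul_right (show 0 < α by omega) ?_⟩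
        rw [hk, hM]; ring
      have hg : M ∣ Nat.gcd b₁.val N := Nat.dvd_gcd hM' ⟨α, by rw [hM]; ring⟩
      have h1 : M ≤ Nat.gcd b₁.val N :=
        Nat.le_of_dvd (Nat.gcd_pos_of_pos_right _ hN0) hg
      have hMd : N / α = M := by
        rw [hM]; exact Nat.mul_div_cancel_left M (by omega)
      omega
    · simp only [Matrix.cons_val_zero, mul_one] at h
      subst h
      simp [ZMod.val_zero] at hc2
      have := Nat.div_le_self N α
      omega
  · rintro u v huv ⟨i, j, k, hij, hik, hjk, hi, hj, hk⟩
    have hP : ∀ n : Fin 4, (n = i ∨ n = j ∨ n = k) →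
        u * ((![((α : ZMod N), 1), (1, (α : ZMod N)), ((α : ZMod N), -1), (-1, (α : ZMod N))]) n).1 +
          v * ((![((α : ZMod N), 1), (1, (α : ZMod N)), ((α : ZMod N), -1), (-1, (α : ZMod N))]) n).2 = 0 := by
      rintro n (rfl | rfl | rfl) <;> assumption
    have hcomb : ∀ i j k : Fin 4, i ≠ j → i ≠ k → j ≠ k →
        ((((0:Fin 4) = i ∨ (0:Fin 4) = j ∨ (0:Fin 4) = k) ∧ ((2:Fin 4) = i ∨ (2:Fin 4) = j ∨ (2:Fin 4) = k)) ∧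
          (((1:Fin 4) = i ∨ (1:Fin 4) = j ∨ (1:Fin 4) = k) ∨ ((3:Fin 4) = i ∨ (3:Fin 4) = j ∨ (3:Fin 4) = k))) ∨
        ((((1:Fin 4) = i ∨ (1:Fin 4) = j ∨ (1:Fin 4) = k) ∧ ((3:Fin 4) = i ∨ (3:Fin 4) = j ∨ (3:Fin 4) = k)) ∧
          (((0:Fin 4) = i ∨ (0:Fin 4) = j ∨ (0:Fin 4) = k) ∨ ((2:Fin 4) = i ∨ (2:Fin 4) = j ∨ (2:Fin 4) = k))) := by
      decide
    apply triple_contra N α hN hα2 u v huv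
    rcases hcomb i j k hij hik hjk with ⟨⟨m0, m2⟩, m13⟩ | ⟨⟨m1, m3⟩, m02⟩
    · have e0 := hP 0 m0
      have e2 := hP 2 m2
      simp only [Matrix.cons_val_zero, Matrix.cons_val_one, Matrix.head_cons,
        Matrix.cons_val_two, Matrix.tail_cons, Matrix.cons_val_three] at e0 e2
      refine Or.inl ⟨by linear_combination e0, by linear_combination e2, ?_⟩
      rcases m13 with m1 | m3
      · have e1 := hP 1 m1
        simp only [Matrix.cons_val_zero, Matrix.cons_val_one, Matrix.head_cons,
          Matrix.cons_val_two, Matrix.tail_cons, Matrix.cons_val_three] at e1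
        exact Or.inl (by linear_combination e1)
      · have e3 := hP 3 m3
        simp only [Matrix.cons_val_zero, Matrix.cons_val_one, Matrix.head_cons,
          Matrix.cons_val_two, Matrix.tail_cons, Matrix.cons_val_three] at e3
        exact Or.inr (by linear_combination e3)
    · have e1 := hP 1 m1
      have e3 := hP 3 m3
      simp only [Matrix.cons_val_zero, Matrix.cons_val_one, Matrix.head_cons,
        Matrix.cons_val_two, Matrix.tail_cons, Matrix.cons_val_three] at e1 e3
      refine Or.inr ⟨by linear_combination e1, by linear_combination e3, ?_⟩
      rcases m02 with m0 | m2
      · have e0 := hP 0 m0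
        simp only [Matrix.cons_val_zero, Matrix.cons_val_one, Matrix.head_cons,
          Matrix.cons_val_two, Matrix.tail_cons, Matrix.cons_val_three] at e0
        exact Or.inl (by linear_combination e0)
      · have e2 := hP 2 m2
        simp only [Matrix.cons_val_zero, Matrix.cons_val_one, Matrix.head_cons,
          Matrix.cons_val_two, Matrix.tail_cons, Matrix.cons_val_three] at e2
        exact Or.inr (by linear_combination e2)
end

section
/- Let N be even and M = N/2. Every element of the submodule of (ZMod N)^5 generated by (M,M,0,0,0), (M,0,M,0,0), (0,0,0,1,−1) has at least one zero coordinate; i.e., this direct-sum code is thin. -/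
lemma mul_half_cases (N : ℕ) (hN : Even N) (a : ZMod N) :
    a * ((N / 2 : ℕ) : ZMod N) = 0 ∨ a * ((N / 2 : ℕ) : ZMod N) = ((N / 2 : ℕ) : ZMod N) := by
  rcases Nat.eq_zero_or_pos N with rfl | hpos
  · left; simp
  have : NeZero N := ⟨hpos.ne'⟩
  set m : ZMod N := ((N / 2 : ℕ) : ZMod N) with hm
  have h2m : (2 : ZMod N) * m = 0 := by
    rw [hm, show ((2 : ZMod N)) = ((2 : ℕ) : ZMod N) by push_cast; ring, ← Nat.cast_mul,
      Nat.two_mul_div_two_of_even hN, ZMod.natCast_self]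
  have ha' : ((a.val : ℕ) : ZMod N) = a := by rw [ZMod.natCast_val, ZMod.cast_id]
  rcases Nat.even_or_odd a.val with ⟨k, hk⟩ | ⟨k, hk⟩
  · left
    rw [← ha', hk]
    push_cast
    rw [show ((k : ZMod N) + k) * m = k * (2 * m) by ring, h2m, mul_zero]
  · right
    rw [← ha', hk]
    push_cast
    rw [show (2 * (k : ZMod N) + 1) * m = k * (2 * m) + m by ring, h2m, mul_zero, zero_add]

/-- For even `N` and `M = N/2`, every element of the submodule of `(ZMod N)^5` generated by
`(M,M,0,0,0)`, `(M,0,M,0,0)`, `(0,0,0,1,-1)` has a zero coordinate: this direct-sum code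
is thin. -/
theorem direct_sum_code_thin (N : ℕ) (hN : Even N) :
    ∀ c ∈ Submodule.span (ZMod N)
        ({![((N / 2 : ℕ) : ZMod N), ((N / 2 : ℕ) : ZMod N), 0, 0, 0],
          ![((N / 2 : ℕ) : ZMod N), 0, ((N / 2 : ℕ) : ZMod N), 0, 0],
          ![0, 0, 0, 1, -1]} : Set (Fin 5 → ZMod N)),
      ∃ i : Fin 5, c i = 0 := by
  intro c hc
  rw [Submodule.mem_span_insert] at hc
  obtain ⟨a, c1, hc1, rfl⟩ := hc
  rw [Submodule.mem_span_insert] at hc1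
  obtain ⟨b, c2, hc2, rfl⟩ := hc1
  rw [Submodule.mem_span_singleton] at hc2
  obtain ⟨d, rfl⟩ := hc2
  rcases mul_half_cases N hN a with ha | ha
  · exact ⟨1, by simpa using ha⟩
  · rcases mul_half_cases N hN b with hb | hb
    · exact ⟨2, by simpa using hb⟩
    · refine ⟨0, ?_⟩
      have h2m : ((N / 2 : ℕ) : ZMod N) + ((N / 2 : ℕ) : ZMod N) = 0 := by
        obtain ⟨k, hk⟩ := hN
        rw [← Nat.cast_add, show N / 2 + N / 2 = N by omega, ZMod.natCast_self]
      simp only [Pi.add_apply, Pi.smul_apply, Matrix.cons_val_zero, smul_eq_mul, ha, hb]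
      simpa using h2m
end
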